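/- arXiv:1802.05732 — 2 statements merged into one kernel-verified Lean document; each statement's English description precedes it below -/
import Mathlib

section
/- Let k_1 < ⋯ < k_n be natural numbers, q_1, …, q_n nonzero rationals, and α := q_1·χ_[0,k_1] + ⋯ + q_n·χ_[0,k_n] ∈ Γ_log. If q_1 + ⋯ + q_n ≠ 1 then s(α) = s(0) = χ_[0,0]; if q_1 + ⋯ + q_n = 1 then s(α) = s(χ_[0,k_1]) = χ_[0,k_1+1]. -/
noncomputable section

/-- Γ_log : the additive group of finitely supported functions ℕ → ℝ,
linearly ordered lexicographically. -/
abbrev GammaLog : Type := Lex (ℕ →₀ ℝ)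

/-- χ_[0,n] : the characteristic function of {0,…,n}. -/
def chiI (n : ℕ) : GammaLog :=
  toLex (Finsupp.indicator (Finset.range (n + 1)) fun _ _ => (1 : ℝ))

/-- For nonzero α, ψ(α) = χ_[0,n] where n is the least index with α(n) ≠ 0
(junk value when α = 0). -/
def psiL (α : GammaLog) : GammaLog := chiI (sInf {n : ℕ | ofLex α n ≠ 0})

/-- n(α) : the least index with α(n(α)) ≠ 1 (the defining set is nonempty by
finite support). -/
def nuOne (α : GammaLog) : ℕ := sInf {n : ℕ | ofLex α n ≠ 1}

/-- ∫α := α − χ_[0,n(α)]. -/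
def intL (α : GammaLog) : GammaLog := α - chiI (nuOne α)

/-- s(α) := ψ(∫α). -/
def sL (α : GammaLog) : GammaLog := psiL (intL α)

lemma chiI_apply (n m : ℕ) : ofLex (chiI n) m = if m ≤ n then (1:ℝ) else 0 := by
  simp [chiI, Finsupp.indicator_apply, Nat.lt_succ_iff]

lemma ofLex_sub_apply (a b : GammaLog) (m : ℕ) :
    ofLex (a - b) m = ofLex a m - ofLex b m := rfl

lemma natInf_eq {S : Set ℕ} {m : ℕ} (h1 : m ∈ S) (h2 : ∀ j, j < m → j ∉ S) :
    sInf S = m := by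
  refine le_antisymm (Nat.sInf_le h1) ?_
  by_contra h
  push_neg at h
  exact h2 _ h (Nat.sInf_mem ⟨m, h1⟩)

/-- For α = q_1·χ_[0,k_1] + ⋯ + q_n·χ_[0,k_n] with k_1 < ⋯ < k_n and all q_i
nonzero: if ∑ q_i ≠ 1 then s(α) = s(0) = χ_[0,0]; if ∑ q_i = 1 then
s(α) = s(χ_[0,k_1]) = χ_[0,k_1+1]. -/
theorem sL_rational_combination (n : ℕ) (hn : 0 < n) (k : Fin n → ℕ)
    (hk : StrictMono k) (q : Fin n → ℚ) (hq : ∀ i, q i ≠ 0) :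
    (∑ i, q i ≠ 1 →
      sL (toLex (∑ i, q i • ofLex (chiI (k i)))) = sL 0 ∧
      sL (0 : GammaLog) = chiI 0) ∧
    (∑ i, q i = 1 →
      sL (toLex (∑ i, q i • ofLex (chiI (k i)))) = sL (chiI (k ⟨0, hn⟩)) ∧
      sL (chiI (k ⟨0, hn⟩)) = chiI (k ⟨0, hn⟩ + 1)) := by
  set i0 : Fin n := ⟨0, hn⟩ with hi0
  set A : ℕ →₀ ℝ := ∑ i, q i • ofLex (chiI (k i)) with hA
  have hAm : ∀ m, A m = ∑ i, if m ≤ k i then (q i : ℝ) else 0 := by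
    intro m
    rw [hA, Finsupp.finset_sum_apply]
    refine Finset.sum_congr rfl fun i _ => ?_
    rw [Finsupp.smul_apply, chiI_apply, Rat.smul_def]
    split <;> simp
  have hlow : ∀ m, m ≤ k i0 → A m = ((∑ i, q i : ℚ) : ℝ) := by
    intro m hm
    rw [hAm]
    push_cast
    refine Finset.sum_congr rfl fun i _ => ?_
    rw [if_pos (hm.trans (hk.monotone (Fin.le_def.mpr (Nat.zero_le _))))]
  have hhigh : A (k i0 + 1) = (((∑ i, q i) - q i0 : ℚ) : ℝ) := by
    rw [hAm]
    push_cast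
    have : ∀ i : Fin n, (if k i0 + 1 ≤ k i then (q i : ℝ) else 0)
        = (q i : ℝ) - (if i = i0 then (q i : ℝ) else 0) := by
      intro i
      rcases eq_or_ne i i0 with h | h
      · subst h; simp
      · have hlt : i0 < i := by
          have : i.val ≠ 0 := fun hv => h (Fin.ext hv)
          exact Fin.lt_def.mpr (Nat.pos_of_ne_zero this)
        rw [if_neg h, if_pos (Nat.succ_le_of_lt (hk hlt)), sub_zero]
    rw [Finset.sum_congr rfl fun i _ => this i, Finset.sum_sub_distrib,
      Finset.sum_ite_eq' Finset.univ i0 (fun i => (q i : ℝ)),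
      if_pos (Finset.mem_univ i0)]
  constructor
  · intro h
    have h0 : A 0 ≠ 1 := by
      rw [hlow 0 (Nat.zero_le _)]
      exact_mod_cast h
    have hnu : nuOne (toLex A) = 0 :=
      Nat.sInf_eq_zero.mpr (Or.inl (by simpa using h0))
    have hsA : sL (toLex A) = chiI 0 := by
      unfold sL psiL intL
      rw [hnu]
      congr 1
      refine Nat.sInf_eq_zero.mpr (Or.inl ?_)
      show ofLex (toLex A - chiI 0) 0 ≠ 0
      rw [ofLex_sub_apply, chiI_apply]
      simp only [ofLex_toLex, le_refl, if_pos]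
      intro hc
      exact h0 (by linarith [sub_eq_zero.mp hc])
    have hs0 : sL (0 : GammaLog) = chiI 0 := by
      unfold sL psiL intL
      have hnu0 : nuOne (0 : GammaLog) = 0 :=
        Nat.sInf_eq_zero.mpr (Or.inl (by norm_num [Set.mem_setOf_eq]))
      rw [hnu0]
      congr 1
      refine Nat.sInf_eq_zero.mpr (Or.inl ?_)
      show ofLex ((0 : GammaLog) - chiI 0) 0 ≠ 0
      rw [ofLex_sub_apply, chiI_apply]
      norm_num
    exact ⟨hsA.trans hs0.symm, hs0⟩
  · intro h
    have hq0 : (q i0 : ℝ) ≠ 0 := by exact_mod_cast hq i0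
    -- value of A at k i0 + 1 is 1 - q i0
    have hhigh' : A (k i0 + 1) = 1 - (q i0 : ℝ) := by
      rw [hhigh, h]; push_cast; ring
    have hnu : nuOne (toLex A) = k i0 + 1 := by
      refine natInf_eq ?_ ?_
      · show ofLex (toLex A) (k i0 + 1) ≠ 1
        rw [ofLex_toLex, hhigh']
        intro hc
        exact hq0 (by linarith)
      · intro j hj hjS
        apply hjS
        show ofLex (toLex A) j = 1
        rw [ofLex_toLex, hlow j (Nat.lt_succ_iff.mp hj), h]
        norm_num
    have hsA : sL (toLex A) = chiI (k i0 + 1) := by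
      unfold sL psiL intL
      rw [hnu]
      congr 1
      refine natInf_eq ?_ ?_
      · show ofLex (toLex A - chiI (k i0 + 1)) (k i0 + 1) ≠ 0
        rw [ofLex_sub_apply, chiI_apply, ofLex_toLex, hhigh', if_pos le_rfl]
        intro hc
        exact hq0 (by linarith)
      · intro j hj hjS
        apply hjS
        show ofLex (toLex A - chiI (k i0 + 1)) j = 0
        rw [ofLex_sub_apply, chiI_apply, ofLex_toLex,
          hlow j (Nat.lt_succ_iff.mp hj), h, if_pos (le_of_lt hj)]
        norm_num
    have hschi : sL (chiI (k i0)) = chiI (k i0 + 1) := by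
      unfold sL psiL intL
      have hnuc : nuOne (chiI (k i0)) = k i0 + 1 := by
        refine natInf_eq ?_ ?_
        · show ofLex (chiI (k i0)) (k i0 + 1) ≠ 1
          rw [chiI_apply, if_neg (by omega)]
          norm_num
        · intro j hj hjS
          apply hjS
          show ofLex (chiI (k i0)) j = 1
          rw [chiI_apply, if_pos (Nat.lt_succ_iff.mp hj)]
      rw [hnuc]
      congr 1
      refine natInf_eq ?_ ?_
      · show ofLex (chiI (k i0) - chiI (k i0 + 1)) (k i0 + 1) ≠ 0
        rw [ofLex_sub_apply, chiI_apply, chiI_apply, if_neg (by omega),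
          if_pos le_rfl]
        norm_num
      · intro j hj hjS
        apply hjS
        show ofLex (chiI (k i0) - chiI (k i0 + 1)) j = 0
        rw [ofLex_sub_apply, chiI_apply, chiI_apply,
          if_pos (Nat.lt_succ_iff.mp hj), if_pos (le_of_lt hj)]
        norm_num
    exact ⟨hsA.trans hschi.symm, hschi⟩
end
end

section
/- Let (Γ, ψ) be a model of T_log, let Γ_0 be a divisible subgroup of Γ such that ψ(Γ_0 ∖ {0}) ⊆ Γ_0, s(Γ_0) ⊆ Γ_0, and p(γ) ∈ Γ_0 for every γ ∈ Γ_0 with p(γ) ≠ ∞ (these closure conditions hold, e.g., when Γ_0 underlies an elementary substructure), and let c_1, …, c_m ∈ Γ ∖ Γ_0. Set Γ_1 := Γ_0 + ℚc_1 + ⋯ + ℚc_m. Then the set p(Γ_1) ∖ p(Γ_0) (computed in Γ ∪ {∞}) has at most m + 1 elements. -/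
/-!
Write `s t = ψ (I t)`. For `t < t'` in `Ψ` one has `ψ (t' - t) = s t`, and `s` is injective
on `Ψ`. Hence if `q` is a nonzero rational weighting of finitely many elements of `Ψ` with
`∑ qᵢ = 0`, rewriting `∑ qᵢ tᵢ = ∑ qᵢ (tᵢ - t_max)` exhibits it as a sum of terms with pairwise
distinct `ψ`-values `s tᵢ`, so `ψ (∑ qᵢ tᵢ) = s tᵢ` for some `i`. Closure of `Γ₀` under `p` gives
`s t ∉ Γ₀` for `t ∈ Ψ \ Γ₀`, while `ψ` maps `Γ₀ \ {0}` into `Γ₀`; so the elements of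
`Ψ ∩ Γ₁ \ Γ₀` are affinely independent modulo `Γ₀`. Their images lie in the span of the `m`
images of the `cᵢ` in `Γ / Γ₀`, so there are at most `m + 1` of them, and every new value of `p`
on `Γ₁` is a value of `p` at one of them.
-/

section AsymptoticCouple

variable {Γ : Type*} [AddCommGroup Γ] {ψ : Γ → Γ}

theorem psi_neg (hAC2 : ∀ α : Γ, α ≠ 0 → ∀ k : ℤ, k ≠ 0 → ψ (k • α) = ψ α)
    {x : Γ} (hx : x ≠ 0) : ψ (-x) = ψ x := by
  simpa using hAC2 x hx (-1) (by norm_num)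

theorem psi_rat_smul [Module ℚ Γ]
    (hAC2 : ∀ α : Γ, α ≠ 0 → ∀ k : ℤ, k ≠ 0 → ψ (k • α) = ψ α)
    {r : ℚ} (hr : r ≠ 0) {x : Γ} (hx : x ≠ 0) : ψ (r • x) = ψ x := by
  have hden : r.den • (r • x) = r.num • x := by
    rw [← Nat.cast_smul_eq_nsmul ℚ, ← Int.cast_smul_eq_zsmul ℚ, smul_smul, Rat.den_mul_eq_num]
  calc ψ (r • x) = ψ ((r.den : ℤ) • (r • x)) :=
        (hAC2 _ (smul_ne_zero hr hx) _ (by exact_mod_cast r.den_nz)).symm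
    _ = ψ x := by rw [natCast_zsmul, hden, hAC2 x hx _ (Rat.num_ne_zero.mpr hr)]

variable [LinearOrder Γ] {I : Γ → Γ}

theorem psi_add_eq_min_of_ne
    (hAC1 : ∀ α β : Γ, α ≠ 0 → β ≠ 0 → α + β ≠ 0 → min (ψ α) (ψ β) ≤ ψ (α + β))
    (hAC2 : ∀ α : Γ, α ≠ 0 → ∀ k : ℤ, k ≠ 0 → ψ (k • α) = ψ α)
    {x y : Γ} (hx : x ≠ 0) (hy : y ≠ 0) (hxy : ψ x ≠ ψ y) :
    x + y ≠ 0 ∧ ψ (x + y) = min (ψ x) (ψ y) := by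
  wlog hlt : ψ x < ψ y generalizing x y
  · rw [add_comm, min_comm]
    exact this hy hx hxy.symm (hxy.symm.lt_of_le (not_lt.mp hlt))
  have hsum : x + y ≠ 0 := by
    intro h
    rw [eq_neg_of_add_eq_zero_right h, psi_neg hAC2 hx] at hlt
    exact hlt.false
  refine ⟨hsum, le_antisymm ?_ (hAC1 x y hx hy hsum)⟩
  rw [min_eq_left hlt.le]
  by_contra! hgt
  have := hAC1 (x + y) (-y) hsum (neg_ne_zero.mpr hy) (by rwa [add_neg_cancel_right])
  rw [add_neg_cancel_right, psi_neg hAC2 hy] at this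
  exact this.not_gt (lt_min hgt hlt)

theorem sum_ne_zero_and_exists_psi_sum_eq
    (hAC1 : ∀ α β : Γ, α ≠ 0 → β ≠ 0 → α + β ≠ 0 → min (ψ α) (ψ β) ≤ ψ (α + β))
    (hAC2 : ∀ α : Γ, α ≠ 0 → ∀ k : ℤ, k ≠ 0 → ψ (k • α) = ψ α)
    {ι : Type*} {J : Finset ι} (hJ : J.Nonempty) {a : ι → Γ} (ha : ∀ i ∈ J, a i ≠ 0)
    (hinj : Set.InjOn (ψ ∘ a) J) :
    ∑ i ∈ J, a i ≠ 0 ∧ ∃ i ∈ J, ψ (∑ i ∈ J, a i) = ψ (a i) := by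
  induction hJ using Finset.Nonempty.cons_induction with
  | singleton i => simpa using ha i (Finset.mem_singleton_self i)
  | cons i J hiJ hJ ih =>
    simp only [Finset.coe_cons, Finset.mem_cons, forall_eq_or_imp] at ha hinj ⊢
    obtain ⟨hsum, j, hj, hψj⟩ := ih ha.2 (hinj.mono (Set.subset_insert _ _))
    have hne : ψ (a i) ≠ ψ (∑ k ∈ J, a k) := by
      rw [hψj]
      exact fun h => hiJ (hinj (Set.mem_insert _ _) (Set.mem_insert_of_mem _ hj) h ▸ hj)
    obtain ⟨hsum', hψ⟩ := psi_add_eq_min_of_ne hAC1 hAC2 ha.1 hsum hne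
    rw [Finset.sum_cons]
    refine ⟨hsum', ?_⟩
    rcases min_choice (ψ (a i)) (ψ (∑ k ∈ J, a k)) with h | h
    · exact ⟨i, Or.inl rfl, hψ.trans h⟩
    · exact ⟨j, Or.inr hj, hψ.trans (h.trans hψj)⟩

theorem psi_integral_le_of_lt
    (hsucc : ∀ α ∈ ψ '' {x : Γ | x ≠ 0}, α < ψ (I α) ∧ ψ (I α) ∈ ψ '' {x : Γ | x ≠ 0} ∧
      ¬ ∃ β ∈ ψ '' {x : Γ | x ≠ 0}, α < β ∧ β < ψ (I α))
    {t t' : Γ} (ht : t ∈ ψ '' {x | x ≠ 0}) (ht' : t' ∈ ψ '' {x | x ≠ 0}) (hlt : t < t') :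
    ψ (I t) ≤ t' :=
  not_lt.mp fun h => (hsucc t ht).2.2 ⟨t', ht', hlt, h⟩

theorem psi_sub_eq_psi_integral [IsOrderedAddMonoid Γ]
    (hAC2 : ∀ α : Γ, α ≠ 0 → ∀ k : ℤ, k ≠ 0 → ψ (k • α) = ψ α)
    (hAC3 : ∀ α β : Γ, 0 < α → β ≠ 0 → ψ β < α + ψ α)
    (hHC : ∀ α β : Γ, 0 < α → α ≤ β → ψ β ≤ ψ α)
    (hI : ∀ α : Γ, I α ≠ 0 ∧ I α + ψ (I α) = α)
    (hsucc : ∀ α ∈ ψ '' {x : Γ | x ≠ 0}, α < ψ (I α) ∧ ψ (I α) ∈ ψ '' {x : Γ | x ≠ 0} ∧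
      ¬ ∃ β ∈ ψ '' {x : Γ | x ≠ 0}, α < β ∧ β < ψ (I α))
    {t t' : Γ} (ht : t ∈ ψ '' {x | x ≠ 0}) (ht' : t' ∈ ψ '' {x | x ≠ 0}) (hlt : t < t') :
    ψ (t' - t) = ψ (I t) := by
  have hgap : ψ (ψ (I t) - t) = ψ (I t) := by
    have h : ψ (I t) - t = -I t := by
      rw [eq_neg_iff_add_eq_zero, sub_add_eq_add_sub, add_comm, (hI t).2, sub_self]
    rw [h, psi_neg hAC2 (hI t).1]
  have hupper : ψ (t' - t) ≤ ψ (I t) :=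
    hgap ▸ hHC _ _ (sub_pos.mpr (hsucc t ht).1)
      (sub_le_sub_right (psi_integral_le_of_lt hsucc ht ht' hlt) t)
  have hlower : t < ψ (t' - t) := by
    obtain ⟨b, hb, rfl⟩ := ht'
    have := hAC3 (ψ b - t) b (sub_pos.mpr hlt) hb
    rwa [sub_add_eq_add_sub, lt_sub_iff_add_lt, add_lt_add_iff_left] at this
  exact hupper.antisymm
    (psi_integral_le_of_lt hsucc ht ⟨t' - t, sub_ne_zero.mpr hlt.ne', rfl⟩ hlower)

theorem sum_smul_ne_zero_and_exists_psi_sum_smul_eq [IsOrderedAddMonoid Γ] [Module ℚ Γ]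
    (hAC1 : ∀ α β : Γ, α ≠ 0 → β ≠ 0 → α + β ≠ 0 → min (ψ α) (ψ β) ≤ ψ (α + β))
    (hAC2 : ∀ α : Γ, α ≠ 0 → ∀ k : ℤ, k ≠ 0 → ψ (k • α) = ψ α)
    (hAC3 : ∀ α β : Γ, 0 < α → β ≠ 0 → ψ β < α + ψ α)
    (hHC : ∀ α β : Γ, 0 < α → α ≤ β → ψ β ≤ ψ α)
    (hI : ∀ α : Γ, I α ≠ 0 ∧ I α + ψ (I α) = α)
    (hsucc : ∀ α ∈ ψ '' {x : Γ | x ≠ 0}, α < ψ (I α) ∧ ψ (I α) ∈ ψ '' {x : Γ | x ≠ 0} ∧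
      ¬ ∃ β ∈ ψ '' {x : Γ | x ≠ 0}, α < β ∧ β < ψ (I α))
    (hinj : Set.InjOn (fun α => ψ (I α)) (ψ '' {x : Γ | x ≠ 0}))
    {ι : Type*} {s : Finset ι} (hs : s.Nonempty) {t : ι → Γ}
    (ht : ∀ i ∈ s, t i ∈ ψ '' {x | x ≠ 0}) (htinj : Set.InjOn t s)
    {w : ι → ℚ} (hw : ∀ i ∈ s, w i ≠ 0) (hwsum : ∑ i ∈ s, w i = 0) :
    ∑ i ∈ s, w i • t i ≠ 0 ∧ ∃ i ∈ s, ψ (∑ i ∈ s, w i • t i) = ψ (I (t i)) := by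
  classical
  obtain ⟨i₀, hi₀, hmax⟩ := s.exists_max_image t hs
  have hlt : ∀ i ∈ s.erase i₀, t i < t i₀ := fun i hi =>
    (hmax i (Finset.mem_of_mem_erase hi)).lt_of_ne
      fun h => Finset.ne_of_mem_erase hi (htinj (Finset.mem_of_mem_erase hi) hi₀ h)
  have hshift : ∑ i ∈ s, w i • t i = ∑ i ∈ s.erase i₀, w i • (t i - t i₀) := by
    rw [Finset.sum_erase _ (by simp), Finset.sum_congr rfl fun i _ => smul_sub (w i) _ _,
      Finset.sum_sub_distrib, ← Finset.sum_smul, hwsum, zero_smul, sub_zero]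
  have hJ : (s.erase i₀).Nonempty := by
    by_contra hJ
    rw [Finset.not_nonempty_iff_eq_empty, Finset.erase_eq_empty_iff] at hJ
    rcases hJ with rfl | rfl
    · exact Finset.not_nonempty_empty hs
    · exact hw i₀ hi₀ (by simpa using hwsum)
  have hψ : ∀ i ∈ s.erase i₀, ψ (w i • (t i - t i₀)) = ψ (I (t i)) := fun i hi => by
    have hi' := Finset.mem_of_mem_erase hi
    rw [psi_rat_smul hAC2 (hw i hi') (sub_ne_zero.mpr (hlt i hi).ne), ← neg_sub,
      psi_neg hAC2 (sub_ne_zero.mpr (hlt i hi).ne'),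
      psi_sub_eq_psi_integral hAC2 hAC3 hHC hI hsucc (ht i hi') (ht i₀ hi₀) (hlt i hi)]
  obtain ⟨hne, i, hi, hψi⟩ := sum_ne_zero_and_exists_psi_sum_eq hAC1 hAC2 hJ
    (a := fun i => w i • (t i - t i₀))
    (fun i hi => smul_ne_zero (hw i (Finset.mem_of_mem_erase hi)) (sub_ne_zero.mpr (hlt i hi).ne))
    (fun i hi j hj h => htinj (Finset.mem_of_mem_erase hi) (Finset.mem_of_mem_erase hj)
      (hinj (ht i (Finset.mem_of_mem_erase hi)) (ht j (Finset.mem_of_mem_erase hj))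
        ((hψ i hi).symm.trans (h.trans (hψ j hj)))))
  rw [hshift]
  exact ⟨hne, i, Finset.mem_of_mem_erase hi, hψi.trans (hψ i hi)⟩

theorem psi_integral_not_mem
    (hmaps : Set.MapsTo (fun α => ψ (I α)) (ψ '' {x : Γ | x ≠ 0})
      {β ∈ ψ '' {x : Γ | x ≠ 0} | ψ (I 0) < β})
    (hinj : Set.InjOn (fun α => ψ (I α)) (ψ '' {x : Γ | x ≠ 0}))
    {p : Γ → WithTop Γ}
    (hp : ∀ α ∈ ψ '' {x : Γ | x ≠ 0}, ψ (I 0) < α →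
      ∃ β ∈ ψ '' {x : Γ | x ≠ 0}, ψ (I β) = α ∧ p α = (β : WithTop Γ))
    {Γ0 : Set Γ} (hpΓ0 : ∀ γ ∈ Γ0, ∀ β : Γ, p γ = (β : WithTop Γ) → β ∈ Γ0)
    {t : Γ} (ht : t ∈ ψ '' {x | x ≠ 0}) (htΓ0 : t ∉ Γ0) : ψ (I t) ∉ Γ0 := by
  intro hst
  obtain ⟨β, hβ, hsβ, hpβ⟩ := hp _ (hmaps ht).1 (hmaps ht).2
  exact htΓ0 (hinj hβ ht hsβ ▸ hpΓ0 _ hst β hpβ)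

theorem affineIndependent_mkQ [IsOrderedAddMonoid Γ] [Module ℚ Γ]
    (hAC1 : ∀ α β : Γ, α ≠ 0 → β ≠ 0 → α + β ≠ 0 → min (ψ α) (ψ β) ≤ ψ (α + β))
    (hAC2 : ∀ α : Γ, α ≠ 0 → ∀ k : ℤ, k ≠ 0 → ψ (k • α) = ψ α)
    (hAC3 : ∀ α β : Γ, 0 < α → β ≠ 0 → ψ β < α + ψ α)
    (hHC : ∀ α β : Γ, 0 < α → α ≤ β → ψ β ≤ ψ α)
    (hI : ∀ α : Γ, I α ≠ 0 ∧ I α + ψ (I α) = α)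
    (hsucc : ∀ α ∈ ψ '' {x : Γ | x ≠ 0}, α < ψ (I α) ∧ ψ (I α) ∈ ψ '' {x : Γ | x ≠ 0} ∧
      ¬ ∃ β ∈ ψ '' {x : Γ | x ≠ 0}, α < β ∧ β < ψ (I α))
    (hinj : Set.InjOn (fun α => ψ (I α)) (ψ '' {x : Γ | x ≠ 0}))
    (Γ0 : Submodule ℚ Γ) (hψΓ0 : ∀ γ ∈ Γ0, γ ≠ 0 → ψ γ ∈ Γ0)
    (hsΓ0 : ∀ t ∈ ψ '' {x | x ≠ 0}, t ∉ Γ0 → ψ (I t) ∉ Γ0)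
    {S : Set Γ} (hS : S ⊆ ψ '' {x | x ≠ 0} \ Γ0) :
    AffineIndependent ℚ (fun t : S => Γ0.mkQ t) := by
  classical
  rw [affineIndependent_iff]
  intro s w hwsum hwt i hi
  by_contra hwi
  have hsum : ∑ j ∈ s with w j ≠ 0, w j = 0 := by rwa [Finset.sum_filter_ne_zero]
  have hmem : ∑ j ∈ s with w j ≠ 0, w j • (j : Γ) ∈ Γ0 := by
    rw [Finset.sum_filter_of_ne fun j _ h => left_ne_zero_of_smul h,
      ← Submodule.Quotient.mk_eq_zero, ← Submodule.mkQ_apply, map_sum]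
    simpa only [map_smul] using hwt
  obtain ⟨hne, j, hj, hψj⟩ := sum_smul_ne_zero_and_exists_psi_sum_smul_eq hAC1 hAC2 hAC3 hHC hI
    hsucc hinj ⟨i, Finset.mem_filter.mpr ⟨hi, hwi⟩⟩ (fun j _ => (hS j.2).1)
    Subtype.val_injective.injOn (fun j hj => (Finset.mem_filter.mp hj).2) hsum
  exact hsΓ0 _ (hS j.2).1 (hS j.2).2 (hψj ▸ hψΓ0 _ hmem hne)

end AsymptoticCouple

theorem Set.image_diff_image_subset_image_of_eq {α β : Type*} {f : α → β} {A B P : Set α} {b : α}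
    (hb : b ∈ B) (hf : ∀ a ∉ P, f a = f b) :
    f '' A \ f '' B ⊆ f '' {a ∈ A | a ∈ P ∧ a ∉ B} := by
  rintro _ ⟨⟨a, ha, rfl⟩, hnot⟩
  refine ⟨a, ⟨ha, ?_, fun haB => hnot ⟨a, haB, rfl⟩⟩, rfl⟩
  by_contra haP
  exact hnot ⟨b, hb, (hf a haP).symm⟩

theorem AffineIndependent.finite_and_card_le_of_mem_span {K V ι : Type*} [Field K]
    [AddCommGroup V] [Module K V] {p : ι → V} (hp : AffineIndependent K p) {m : ℕ}
    (c : Fin m → V) (hpc : ∀ i, p i ∈ Submodule.span K (Set.range c)) :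
    Finite ι ∧ Nat.card ι ≤ m + 1 := by
  set W := Submodule.span K (Set.range c)
  have : FiniteDimensional K W := FiniteDimensional.span_of_finite K (Set.finite_range c)
  have hW : Module.finrank K W ≤ m := by
    simpa [Set.finrank] using finrank_range_le_card (R := K) c
  set p' : ι → W := fun i => ⟨p i, hpc i⟩
  have hp' : AffineIndependent K p' := hp.of_comp W.subtype.toAffineMap
  have : Finite ι := finite_of_fin_dim_affineIndependent K hp'
  have : Fintype ι := Fintype.ofFinite ι
  refine ⟨inferInstance, ?_⟩
  rw [Nat.card_eq_fintype_card]
  exact hp'.card_le_finrank_succ.trans (Nat.add_le_add_right ((Submodule.finrank_le _).trans hW) 1)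

theorem mkQ_mem_span_of_mem_sup_span {K V : Type*} [Field K] [AddCommGroup V] [Module K V]
    (N : Submodule K V) {m : ℕ} (c : Fin m → V) {x : V}
    (hx : x ∈ {x | ∃ γ ∈ N, ∃ q : Fin m → K, x = γ + ∑ i, q i • c i}) :
    N.mkQ x ∈ Submodule.span K (Set.range (N.mkQ ∘ c)) := by
  obtain ⟨γ, hγ, q, rfl⟩ := hx
  rw [Submodule.mem_span_range_iff_exists_fun]
  refine ⟨q, ?_⟩
  rw [map_add, map_sum, N.mkQ_apply γ, (Submodule.Quotient.mk_eq_zero N).mpr hγ, zero_add]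
  simp only [Function.comp_apply, map_smul]

theorem finite_p_extension_general
    {Γ : Type*} [AddCommGroup Γ] [LinearOrder Γ] [IsOrderedAddMonoid Γ] [Module ℚ Γ]
    (ψ : Γ → Γ)
    (hAC1 : ∀ α β : Γ, α ≠ 0 → β ≠ 0 → α + β ≠ 0 → min (ψ α) (ψ β) ≤ ψ (α + β))
    (hAC2 : ∀ α : Γ, α ≠ 0 → ∀ k : ℤ, k ≠ 0 → ψ (k • α) = ψ α)
    (hAC3 : ∀ α β : Γ, 0 < α → β ≠ 0 → ψ β < α + ψ α)
    (hHC : ∀ α β : Γ, 0 < α → α ≤ β → ψ β ≤ ψ α)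
    (I : Γ → Γ) (hI : ∀ α : Γ, I α ≠ 0 ∧ I α + ψ (I α) = α)
    (hpos : (0 : Γ) < ψ (I 0))
    (hsucc : ∀ α ∈ ψ '' {x : Γ | x ≠ 0}, α < ψ (I α) ∧ ψ (I α) ∈ ψ '' {x : Γ | x ≠ 0} ∧
      ¬ ∃ β ∈ ψ '' {x : Γ | x ≠ 0}, α < β ∧ β < ψ (I α))
    (hbij : Set.BijOn (fun α => ψ (I α)) (ψ '' {x : Γ | x ≠ 0})
      {β ∈ ψ '' {x : Γ | x ≠ 0} | ψ (I 0) < β})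
    (p : Γ → WithTop Γ)
    (hp : ∀ α : Γ,
      (α ∈ ψ '' {x : Γ | x ≠ 0} → ψ (I 0) < α →
        ∃ β ∈ ψ '' {x : Γ | x ≠ 0}, ψ (I β) = α ∧ p α = (β : WithTop Γ)) ∧
      (¬ (α ∈ ψ '' {x : Γ | x ≠ 0} ∧ ψ (I 0) < α) → p α = ⊤))
    (Γ0 : Submodule ℚ Γ)
    (hψΓ0 : ∀ γ ∈ Γ0, γ ≠ 0 → ψ γ ∈ Γ0)
    (hpΓ0 : ∀ γ ∈ Γ0, ∀ β : Γ, p γ = (β : WithTop Γ) → β ∈ Γ0)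
    (m : ℕ) (c : Fin m → Γ) :
    (p '' {x | ∃ γ ∈ Γ0, ∃ q : Fin m → ℚ, x = γ + ∑ i, q i • c i} \
        p '' (Γ0 : Set Γ)).Finite ∧
    (p '' {x | ∃ γ ∈ Γ0, ∃ q : Fin m → ℚ, x = γ + ∑ i, q i • c i} \
        p '' (Γ0 : Set Γ)).ncard ≤ m + 1 := by
  set D := {α ∈ {x | ∃ γ ∈ Γ0, ∃ q : Fin m → ℚ, x = γ + ∑ i, q i • c i} |
    (α ∈ ψ '' {x : Γ | x ≠ 0} ∧ ψ (I 0) < α) ∧ α ∉ Γ0}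
  have hsub := Set.image_diff_image_subset_image_of_eq (f := p)
    (A := {x | ∃ γ ∈ Γ0, ∃ q : Fin m → ℚ, x = γ + ∑ i, q i • c i}) Γ0.zero_mem
    fun α hα => ((hp α).2 hα).trans ((hp 0).2 fun h => h.2.not_gt hpos).symm
  have hind : AffineIndependent ℚ (fun t : D => Γ0.mkQ t) :=
    affineIndependent_mkQ hAC1 hAC2 hAC3 hHC hI hsucc hbij.injOn Γ0 hψΓ0
      (fun t ht => psi_integral_not_mem hbij.mapsTo hbij.injOn (fun α => (hp α).1) hpΓ0 ht)
      fun α hα => ⟨hα.2.1.1, hα.2.2⟩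
  obtain ⟨hfin, hcard⟩ := hind.finite_and_card_le_of_mem_span (Γ0.mkQ ∘ c)
    fun α => mkQ_mem_span_of_mem_sup_span Γ0 c α.2.1
  have hD : D.Finite := Set.finite_coe_iff.mp hfin
  refine ⟨(hD.image p).subset hsub, ?_⟩
  calc _ ≤ (p '' D).ncard := Set.ncard_le_ncard hsub (hD.image p)
    _ ≤ D.ncard := Set.ncard_image_le hD
    _ ≤ m + 1 := hcard

/-- Let (Γ, ψ) be a model of T_log: an H-asymptotic couple with Γ divisible,
with asymptotic integration (∫ the integration map, s(α) := ψ(∫α)), such that,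
with Ψ := ψ(Γ ∖ {0}):  Ψ has least element s(0) > 0, s(α) is the immediate
successor in Ψ of each α ∈ Ψ, and s : Ψ → Ψ^{>s(0)} is a bijection.  Let
p : Γ → Γ ∪ {∞} send α ∈ Ψ^{>s(0)} to the unique β ∈ Ψ with s(β) = α and
everything else to ∞.  Let Γ_0 be a divisible subgroup closed under ψ, s and
p (when p ≠ ∞), and c_1, …, c_m ∈ Γ ∖ Γ_0.  Then
p(Γ_0 + ℚc_1 + ⋯ + ℚc_m) ∖ p(Γ_0) has at most m + 1 elements. -/
theorem finite_p_extension
    {Γ : Type*} [AddCommGroup Γ] [LinearOrder Γ] [IsOrderedAddMonoid Γ] [Module ℚ Γ]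
    (ψ : Γ → Γ)
    (hAC1 : ∀ α β : Γ, α ≠ 0 → β ≠ 0 → α + β ≠ 0 → min (ψ α) (ψ β) ≤ ψ (α + β))
    (hAC2 : ∀ α : Γ, α ≠ 0 → ∀ k : ℤ, k ≠ 0 → ψ (k • α) = ψ α)
    (hAC3 : ∀ α β : Γ, 0 < α → β ≠ 0 → ψ β < α + ψ α)
    (hHC : ∀ α β : Γ, 0 < α → α ≤ β → ψ β ≤ ψ α)
    (I : Γ → Γ) (hI : ∀ α : Γ, I α ≠ 0 ∧ I α + ψ (I α) = α)
    (hleast : IsLeast (ψ '' {x : Γ | x ≠ 0}) (ψ (I 0)))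
    (hpos : (0 : Γ) < ψ (I 0))
    (hsucc : ∀ α ∈ ψ '' {x : Γ | x ≠ 0}, α < ψ (I α) ∧ ψ (I α) ∈ ψ '' {x : Γ | x ≠ 0} ∧
      ¬ ∃ β ∈ ψ '' {x : Γ | x ≠ 0}, α < β ∧ β < ψ (I α))
    (hbij : Set.BijOn (fun α => ψ (I α)) (ψ '' {x : Γ | x ≠ 0})
      {β ∈ ψ '' {x : Γ | x ≠ 0} | ψ (I 0) < β})
    (p : Γ → WithTop Γ)
    (hp : ∀ α : Γ,
      (α ∈ ψ '' {x : Γ | x ≠ 0} → ψ (I 0) < α →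
        ∃ β ∈ ψ '' {x : Γ | x ≠ 0}, ψ (I β) = α ∧ p α = (β : WithTop Γ)) ∧
      (¬ (α ∈ ψ '' {x : Γ | x ≠ 0} ∧ ψ (I 0) < α) → p α = ⊤))
    (Γ0 : Submodule ℚ Γ)
    (hψΓ0 : ∀ γ ∈ Γ0, γ ≠ 0 → ψ γ ∈ Γ0)
    (hsΓ0 : ∀ γ ∈ Γ0, ψ (I γ) ∈ Γ0)
    (hpΓ0 : ∀ γ ∈ Γ0, ∀ β : Γ, p γ = (β : WithTop Γ) → β ∈ Γ0)
    (m : ℕ) (c : Fin m → Γ) (hc : ∀ i, c i ∉ Γ0) :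
    (p '' {x | ∃ γ ∈ Γ0, ∃ q : Fin m → ℚ, x = γ + ∑ i, q i • c i} \
        p '' (Γ0 : Set Γ)).Finite ∧
    (p '' {x | ∃ γ ∈ Γ0, ∃ q : Fin m → ℚ, x = γ + ∑ i, q i • c i} \
        p '' (Γ0 : Set Γ)).ncard ≤ m + 1 :=
  finite_p_extension_general ψ hAC1 hAC2 hAC3 hHC I hI hpos hsucc hbij p hp Γ0 hψΓ0 hpΓ0 m c
end
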